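/- arXiv:1508.06760 — 2 statements merged into one kernel-verified Lean document; each statement's English description precedes it below -/
import Mathlib

section
/- Consider the chain-link point set consisting of exactly four points: color a has points (1, 0) and (3, 0), and color b has points (2, 0) and (4, 0). A bus realization y with y(a) ≠ 0 and y(b) ≠ 0 of this point set is planar if and only if y(a) · y(b) < 0, i.e., the two buses lie on opposite sides of the horizontal line through the points. Moreover, in any larger colored point set containing these four points with these two colors, every planar bus realization with y(a) ≠ 0 ≠ y(b) satisfies y(a) · y(b) < 0. -/
open Set

/-- A colored point set: a finite set of points `P` with coordinates `x p`, `y p`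
and colors `f p` in a finite color set `C`; the color map is surjective and no
two points share an x-coordinate (points are allowed to share y-coordinates). -/
structure CPS (P C : Type) [Fintype P] [Fintype C] where
  x : P → ℝ
  y : P → ℝ
  f : P → C
  f_surj : Function.Surjective f
  x_inj : Function.Injective x

variable {P C : Type} [Fintype P] [Fintype C]

/-- Left end `x_l(c)` of the span of color `c`. -/
noncomputable def xl (S : CPS P C) (c : C) : ℝ :=
  sInf (S.x '' {p | S.f p = c})

/-- Right end `x_r(c)` of the span of color `c`. -/
noncomputable def xr (S : CPS P C) (c : C) : ℝ :=
  sSup (S.x '' {p | S.f p = c})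

/-- The bus of color `c`: the horizontal segment at height `Y c` over the span of `c`. -/
def busSeg (S : CPS P C) (Y : C → ℝ) (c : C) : Set (ℝ × ℝ) :=
  {q | q.2 = Y c ∧ q.1 ∈ Icc (xl S c) (xr S c)}

/-- The connection segment of point `p`: the vertical segment from `p` to its bus. -/
def connSeg (S : CPS P C) (Y : C → ℝ) (p : P) : Set (ℝ × ℝ) :=
  {q | q.1 = S.x p ∧ q.2 ∈ uIcc (S.y p) (Y (S.f p))}

/-- Planarity of a bus realization `Y`: no bus contains a point of a different
color, no bus intersects the connection segment of a point of a different color,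
and no two connection segments of points of different colors intersect. -/
def PlanarBus (S : CPS P C) (Y : C → ℝ) : Prop :=
  (∀ (c : C) (p : P), S.f p ≠ c → (S.x p, S.y p) ∉ busSeg S Y c) ∧
  (∀ (c : C) (p : P), S.f p ≠ c → Disjoint (busSeg S Y c) (connSeg S Y p)) ∧
  (∀ p q : P, S.f p ≠ S.f q → Disjoint (connSeg S Y p) (connSeg S Y q))

lemma aux_not_mem {u v : ℝ} (h : u * v < 0) : u ∉ uIcc (0:ℝ) v := by
  intro hm
  rw [Set.mem_uIcc] at hm
  rcases hm with ⟨h1, h2⟩ | ⟨h1, h2⟩ <;> nlinarith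

lemma aux_mem {u v : ℝ} (h : 0 ≤ u * v) (hu : u ≠ 0) (hv : v ≠ 0)
    (habs : |u| ≤ |v|) : u ∈ uIcc (0:ℝ) v := by
  rw [Set.mem_uIcc]
  rcases lt_or_gt_of_ne hv with hv' | hv'
  · right
    have hu' : u < 0 := by rcases lt_or_gt_of_ne hu with h' | h'; exact h'; nlinarith
    rw [abs_of_neg hu', abs_of_neg hv'] at habs
    constructor <;> linarith
  · left
    have hu' : 0 < u := by rcases lt_or_gt_of_ne hu with h' | h'; nlinarith; exact h'
    rw [abs_of_pos hu', abs_of_pos hv'] at habs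
    constructor <;> linarith

lemma xl_le (T : CPS P C) {p : P} {c : C} (h : T.f p = c) : xl T c ≤ T.x p :=
  csInf_le (Set.toFinite _).bddBelow ⟨p, h, rfl⟩

lemma le_xr (T : CPS P C) {p : P} {c : C} (h : T.f p = c) : T.x p ≤ xr T c :=
  le_csSup (Set.toFinite _).bddAbove ⟨p, h, rfl⟩

lemma general {Q D : Type} [Fintype Q] [Fintype D] (T : CPS Q D) (a' b' : D)
    (hab : a' ≠ b') (r0 r1 r2 r3 : Q)
    (hx0 : T.x r0 = 1) (hy0 : T.y r0 = 0) (hf0 : T.f r0 = a')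
    (hx1 : T.x r1 = 2) (hy1 : T.y r1 = 0) (hf1 : T.f r1 = b')
    (hx2 : T.x r2 = 3) (hy2 : T.y r2 = 0) (hf2 : T.f r2 = a')
    (hx3 : T.x r3 = 4) (hy3 : T.y r3 = 0) (hf3 : T.f r3 = b')
    (Y : D → ℝ) (hY : Function.Injective Y) (hpl : PlanarBus T Y)
    (ha : Y a' ≠ 0) (hb : Y b' ≠ 0) : Y a' * Y b' < 0 := by
  by_contra h
  push_neg at h
  rcases le_total (|Y a'|) (|Y b'|) with habs | habs
  · have hd := hpl.2.1 a' r1 (by rw [hf1]; exact Ne.symm hab)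
    refine Set.disjoint_left.mp hd (show ((2:ℝ), Y a') ∈ busSeg T Y a' from ⟨rfl, ?_, ?_⟩) ?_
    · calc xl T a' ≤ T.x r0 := xl_le T hf0
        _ ≤ 2 := by rw [hx0]; norm_num
    · calc (2:ℝ) ≤ T.x r2 := by rw [hx2]; norm_num
        _ ≤ xr T a' := le_xr T hf2
    · exact ⟨hx1.symm, by rw [hy1, hf1]; exact aux_mem h ha hb habs⟩
  · have hd := hpl.2.1 b' r2 (by rw [hf2]; exact hab)
    refine Set.disjoint_left.mp hd (show ((3:ℝ), Y b') ∈ busSeg T Y b' from ⟨rfl, ?_, ?_⟩) ?_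
    · calc xl T b' ≤ T.x r1 := xl_le T hf1
        _ ≤ 3 := by rw [hx1]; norm_num
    · calc (3:ℝ) ≤ T.x r3 := by rw [hx3]; norm_num
        _ ≤ xr T b' := le_xr T hf3
    · exact ⟨hx2.symm, by rw [hy2, hf2]; exact aux_mem (by nlinarith) hb ha habs⟩

/-- the chain-link point set: color `a` has points `(1,0)`,
`(3,0)`, color `b` has points `(2,0)`, `(4,0)`. A bus realization with both
heights nonzero is planar iff the two heights have opposite signs; moreover in
any larger colored point set containing these four points with these two colors,
every planar bus realization with both heights nonzero has heights of opposite
signs. -/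
theorem stmt18 {C : Type} [Fintype C] (a b : C) (hab : a ≠ b)
    (S : CPS (Fin 4) C)
    (h0 : S.x 0 = 1 ∧ S.y 0 = 0 ∧ S.f 0 = a)
    (h1 : S.x 1 = 2 ∧ S.y 1 = 0 ∧ S.f 1 = b)
    (h2 : S.x 2 = 3 ∧ S.y 2 = 0 ∧ S.f 2 = a)
    (h3 : S.x 3 = 4 ∧ S.y 3 = 0 ∧ S.f 3 = b) :
    (∀ Y : C → ℝ, Function.Injective Y → Y a ≠ 0 → Y b ≠ 0 →
      (PlanarBus S Y ↔ Y a * Y b < 0)) ∧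
    (∀ (Q D : Type) [Fintype Q] [Fintype D] (T : CPS Q D) (a' b' : D),
      a' ≠ b' → ∀ r0 r1 r2 r3 : Q,
      T.x r0 = 1 → T.y r0 = 0 → T.f r0 = a' →
      T.x r1 = 2 → T.y r1 = 0 → T.f r1 = b' →
      T.x r2 = 3 → T.y r2 = 0 → T.f r2 = a' →
      T.x r3 = 4 → T.y r3 = 0 → T.f r3 = b' →
      ∀ Y : D → ℝ, Function.Injective Y → PlanarBus T Y →
        Y a' ≠ 0 → Y b' ≠ 0 → Y a' * Y b' < 0) := by
  obtain ⟨hx0, hy0, hf0⟩ := h0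
  obtain ⟨hx1, hy1, hf1⟩ := h1
  obtain ⟨hx2, hy2, hf2⟩ := h2
  obtain ⟨hx3, hy3, hf3⟩ := h3
  have hcolors : ∀ c : C, c = a ∨ c = b := by
    intro c
    obtain ⟨p, rfl⟩ := S.f_surj c
    fin_cases p <;> simp [hf0, hf1, hf2, hf3]
  have hY0 : ∀ p : Fin 4, S.y p = 0 := by
    intro p; fin_cases p <;> assumption
  constructor
  · intro Y hY ha hb
    constructor
    · intro hpl
      exact general S a b hab 0 1 2 3 hx0 hy0 hf0 hx1 hy1 hf1 hx2 hy2 hf2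
        hx3 hy3 hf3 Y hY hpl ha hb
    · intro hsign
      have hYc : ∀ c : C, Y c ≠ 0 := by
        intro c; rcases hcolors c with rfl | rfl <;> assumption
      refine ⟨?_, ?_, ?_⟩
      · intro c p _ hm
        exact hYc c (by rw [← hm.1, hY0 p])
      · intro c p hpc
        rw [Set.disjoint_left]
        rintro ⟨z1, z2⟩ ⟨hz2, _⟩ ⟨_, hzc⟩
        simp only at hz2 hzc
        rw [hY0 p] at hzc
        subst hz2
        rcases hcolors c with rfl | rfl <;> rcases hcolors (S.f p) with hfp | hfp
        · exact hpc hfp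
        · rw [hfp] at hzc; exact aux_not_mem hsign hzc
        · rw [hfp] at hzc; exact aux_not_mem (by nlinarith) hzc
        · exact hpc hfp
      · intro p q hpq
        rw [Set.disjoint_left]
        rintro ⟨z1, z2⟩ ⟨hz1, _⟩ ⟨hz1', _⟩
        simp only at hz1 hz1'
        exact hpq (by rw [S.x_inj (hz1 ▸ hz1' : S.x p = S.x q)])
  · intro Q D _ _ T a' b' hab' r0 r1 r2 r3 hx0' hy0' hf0' hx1' hy1' hf1'
      hx2' hy2' hf2' hx3' hy3' hf3' Y hY hpl ha hb
    exact general T a' b' hab' r0 r1 r2 r3 hx0' hy0' hf0' hx1' hy1' hf1'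
      hx2' hy2' hf2' hx3' hy3' hf3' Y hY hpl ha hb
end

section
/- For k ≥ 1, consider the horizontal chain of k chain links: color c_i has the two points (2i − 1, 0) and (2i + 2, 0) for i = 1, …, k. A bus realization y with y(c_i) ≠ 0 for all i is planar if and only if y(c_i) · y(c_{i+1}) < 0 for every 1 ≤ i < k (consecutive buses lie on opposite sides of the line through the points). Consequently, in every planar such realization, y(c_1) and y(c_k) have the same sign if and only if k is odd. -/
open Set

variable {P C : Type} [Fintype P] [Fintype C]

lemma keyOpp {a b : ℝ} (ha : a ≠ 0) (hb : b ≠ 0)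
    (h1 : b ∉ uIcc (0:ℝ) a) (h2 : a ∉ uIcc (0:ℝ) b) : a * b < 0 := by
  rw [Set.mem_uIcc] at h1 h2
  rcases lt_or_gt_of_ne ha with hA | hA <;> rcases lt_or_gt_of_ne hb with hB | hB
  · exfalso
    have hba : b < a := by
      by_contra hh; push_neg at hh; exact h1 (Or.inr ⟨hh, le_of_lt hB⟩)
    have hab : a < b := by
      by_contra hh; push_neg at hh; exact h2 (Or.inr ⟨hh, le_of_lt hA⟩)
    linarith
  · exact mul_neg_of_neg_of_pos hA hB
  · rw [mul_comm]; exact mul_neg_of_neg_of_pos hB hA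
  · exfalso
    have hba : a < b := by
      by_contra hh; push_neg at hh; exact h1 (Or.inl ⟨le_of_lt hB, hh⟩)
    have hab : b < a := by
      by_contra hh; push_neg at hh; exact h2 (Or.inl ⟨le_of_lt hA, hh⟩)
    linarith

lemma keyNotMem {a b : ℝ} (h : a * b < 0) : a ∉ uIcc (0:ℝ) b := by
  intro hm
  rw [Set.mem_uIcc] at hm
  rcases hm with ⟨h1, h2⟩ | ⟨h1, h2⟩ <;> nlinarith

/-- the horizontal chain of `k` chain links: color `i` (0-based)
has points `(2i+1, 0)` and `(2i+4, 0)`. A bus realization with all heights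
nonzero is planar iff consecutive heights have opposite signs; consequently in
every planar such realization the first and last heights have the same sign iff
`k` is odd. -/
theorem stmt19 {k : ℕ} (hk : 0 < k) (S : CPS (Fin k × Fin 2) (Fin k))
    (hx0 : ∀ i : Fin k, S.x (i, 0) = 2 * ((i : ℕ) : ℝ) + 1)
    (hx1 : ∀ i : Fin k, S.x (i, 1) = 2 * ((i : ℕ) : ℝ) + 4)
    (hy : ∀ p : Fin k × Fin 2, S.y p = 0)
    (hf : ∀ p : Fin k × Fin 2, S.f p = p.1)
    (Y : Fin k → ℝ) (hY : Function.Injective Y) (h0 : ∀ i : Fin k, Y i ≠ 0) :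
    (PlanarBus S Y ↔ ∀ (i : ℕ) (h : i + 1 < k),
      Y ⟨i, by omega⟩ * Y ⟨i + 1, h⟩ < 0) ∧
    (PlanarBus S Y → (0 < Y ⟨0, hk⟩ * Y ⟨k - 1, by omega⟩ ↔ Odd k)) := by
    -- span endpoints
  have himg : ∀ c : Fin k, S.x '' {p : Fin k × Fin 2 | S.f p = c}
      = {2 * ((c : ℕ) : ℝ) + 1, 2 * ((c : ℕ) : ℝ) + 4} := by
    intro c
    ext r
    constructor
    · rintro ⟨⟨j, b⟩, hj, rfl⟩
      simp only [Set.mem_setOf_eq, hf] at hj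
      subst hj
      fin_cases b
      · left; exact hx0 _
      · right; exact hx1 _
    · rintro (rfl | rfl)
      · exact ⟨(c, 0), by simp [hf], hx0 c⟩
      · exact ⟨(c, 1), by simp [hf], hx1 c⟩
  have hxl : ∀ c : Fin k, xl S c = 2 * ((c : ℕ) : ℝ) + 1 := by
    intro c
    rw [xl, himg c, csInf_pair]
    exact min_eq_left (by linarith)
  have hxr : ∀ c : Fin k, xr S c = 2 * ((c : ℕ) : ℝ) + 4 := by
    intro c
    rw [xr, himg c, csSup_pair]
    exact max_eq_right (by linarith)
  have fwd : PlanarBus S Y → ∀ (i : ℕ) (h : i + 1 < k),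
      Y ⟨i, by omega⟩ * Y ⟨i + 1, h⟩ < 0 := by
    intro hP i h
    set c : Fin k := ⟨i, by omega⟩ with hc
    set d : Fin k := ⟨i + 1, h⟩ with hd
    have hcv : (c : ℕ) = i := by rw [hc]
    have hdv : (d : ℕ) = i + 1 := by rw [hd]
    have hcd : c ≠ d := by
      intro hh
      rw [Fin.ext_iff, hcv, hdv] at hh
      omega
    have H1 := hP.2.1 d (c, 1) (by simp only [hf]; exact hcd)
    have H2 := hP.2.1 c (d, 0) (by simp only [hf]; exact fun hh => hcd hh.symm)
    rw [Set.disjoint_left] at H1 H2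
    have hA : Y d ∉ uIcc (0:ℝ) (Y c) := by
      intro hm
      refine H1 (a := (2 * (i:ℝ) + 4, Y d)) ⟨rfl, ?_⟩ ⟨?_, ?_⟩
      · rw [hxl, hxr, Set.mem_Icc, hdv]
        push_cast
        constructor <;> linarith
      · rw [hx1, hcv]
      · rw [hy, hf]
        exact hm
    have hB : Y c ∉ uIcc (0:ℝ) (Y d) := by
      intro hm
      refine H2 (a := (2 * (i:ℝ) + 3, Y c)) ⟨rfl, ?_⟩ ⟨?_, ?_⟩
      · rw [hxl, hxr, Set.mem_Icc, hcv]
        push_cast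
        constructor <;> linarith
      · rw [hx0, hdv]
        push_cast
        ring
      · rw [hy, hf]
        exact hm
    exact keyOpp (h0 c) (h0 d) hA hB
  have bwd : (∀ (i : ℕ) (h : i + 1 < k), Y ⟨i, by omega⟩ * Y ⟨i + 1, h⟩ < 0) →
      PlanarBus S Y := by
    intro hsign
    refine ⟨?_, ?_, ?_⟩
    · intro c p hp hmem
      have h1 : S.y p = Y c := hmem.1
      rw [hy] at h1
      exact h0 c h1.symm
    · intro c p hp
      rw [Set.disjoint_left]
      rintro ⟨r1, r2⟩ ⟨hr2, hr1⟩ ⟨hq1, hq2⟩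
      obtain ⟨j, b⟩ := p
      simp only [hf] at hp hq2
      rw [hy] at hq2
      rw [hxl, hxr] at hr1
      have hjne : (j : ℕ) ≠ (c : ℕ) := fun hh => hp (Fin.ext hh)
      subst hr2 hq1
      fin_cases b
      · -- point (j,0), x = 2j+1, in span of c forces j = c+1
        have hr1' : (2 * ((j:ℕ):ℝ) + 1) ∈ Icc (2*((c:ℕ):ℝ)+1) (2*((c:ℕ):ℝ)+4) := by
          rw [← hx0 j]; exact hr1
        rw [Set.mem_Icc] at hr1'
        have h1 : (c : ℕ) ≤ (j : ℕ) := by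
          exact_mod_cast (by linarith [hr1'.1] : ((c:ℕ):ℝ) ≤ ((j:ℕ):ℝ))
        have h2' : (j : ℕ) < (c : ℕ) + 2 := by
          exact_mod_cast (by push_cast; linarith [hr1'.2] : ((j:ℕ):ℝ) < (((c:ℕ)+2 : ℕ) : ℝ))
        have hj : (j : ℕ) = (c : ℕ) + 1 := by omega
        have hlt : (c : ℕ) + 1 < k := by omega
        have hs := hsign (c : ℕ) hlt
        have e1 : (⟨(c:ℕ), by omega⟩ : Fin k) = c := rfl
        have e2 : (⟨(c:ℕ) + 1, hlt⟩ : Fin k) = j := Fin.ext (by simp [hj])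
        rw [e1, e2] at hs
        exact keyNotMem hs hq2
      · -- point (j,1), x = 2j+4, in span of c forces c = j+1
        have hr1' : (2 * ((j:ℕ):ℝ) + 4) ∈ Icc (2*((c:ℕ):ℝ)+1) (2*((c:ℕ):ℝ)+4) := by
          rw [← hx1 j]; exact hr1
        rw [Set.mem_Icc] at hr1'
        have h1 : (j : ℕ) ≤ (c : ℕ) := by
          exact_mod_cast (by linarith [hr1'.2] : ((j:ℕ):ℝ) ≤ ((c:ℕ):ℝ))
        have h2' : (c : ℕ) < (j : ℕ) + 2 := by
          exact_mod_cast (by push_cast; linarith [hr1'.1] : ((c:ℕ):ℝ) < (((j:ℕ)+2 : ℕ) : ℝ))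
        have hj : (c : ℕ) = (j : ℕ) + 1 := by omega
        have hlt : (j : ℕ) + 1 < k := by omega
        have hs := hsign (j : ℕ) hlt
        have e1 : (⟨(j:ℕ), by omega⟩ : Fin k) = j := rfl
        have e2 : (⟨(j:ℕ) + 1, hlt⟩ : Fin k) = c := Fin.ext (by simp [hj])
        rw [e1, e2] at hs
        rw [mul_comm] at hs
        exact keyNotMem hs hq2
    · intro p q hpq
      rw [Set.disjoint_left]
      rintro ⟨r1, r2⟩ ⟨h1, h2⟩ ⟨h1', h2'⟩
      exact hpq (congrArg S.f (S.x_inj (h1 ▸ h1')))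
  constructor
  · exact ⟨fwd, bwd⟩
  · intro hP
    have hsign := fwd hP
    have main : ∀ n (hn : n < k), (0 < Y ⟨0, hk⟩ * Y ⟨n, hn⟩ ↔ Even n) := by
      intro n
      induction n with
      | zero =>
        intro hn
        have h00 : (⟨0, hn⟩ : Fin k) = ⟨0, hk⟩ := rfl
        rw [h00]
        simpa using mul_self_pos.mpr (h0 ⟨0, hk⟩)
      | succ n ih =>
        intro hn
        have hn' : n < k := by omega
        have ihn := ih hn'
        have hs := hsign n hn
        have hPn : (⟨n, by omega⟩ : Fin k) = ⟨n, hn'⟩ := rfl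
        rw [hPn] at hs
        set a := Y ⟨0, hk⟩
        set b := Y ⟨n, hn'⟩
        set c := Y ⟨n + 1, hn⟩
        have hpos : 0 < a * a := mul_self_pos.mpr (h0 _)
        have hPQ : (a * b) * (a * c) < 0 := by
          calc (a * b) * (a * c) = (a * a) * (b * c) := by ring
          _ < 0 := mul_neg_of_pos_of_neg hpos hs
        have hbne : b ≠ 0 := h0 _
        have hane : a ≠ 0 := h0 _
        have habne : a * b ≠ 0 := mul_ne_zero hane hbne
        have flip : 0 < a * c ↔ ¬ 0 < a * b := by
          constructor
          · intro hq hp; nlinarith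
          · intro hp
            have : a * b < 0 := lt_of_le_of_ne (le_of_not_gt hp) habne
            nlinarith
        rw [flip, ihn, Nat.even_add_one]
    have hlast := main (k - 1) (by omega)
    rw [hlast, Nat.even_sub (by omega : 1 ≤ k)]
    simp only [Nat.even_iff, Nat.odd_iff]
    omega
end
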